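/- arXiv:2106.12218 — 7 statements merged into one kernel-verified Lean document; each statement's English description precedes it below -/
import Mathlib

section
/- Let d be an integer with 1 ≤ d < q, write gcd(d,q) = p^j and d = (d_0 + d_1 p + … + d_{n-1} p^{n-1})·p^j with 0 ≤ d_i < p for i = 0,…,n−1 and d_0 d_{n-1} ≠ 0, and let f_d(X) = X^d ∈ F_q[X]. If (d_0+1)(d_1+1)⋯(d_{n-1}+1) ≤ p, then for any integer s with (d_0+1)(d_1+1)⋯(d_{n-1}+1) ≤ s ≤ q there exist a subset A ⊆ F_q of size s and a vector c ∈ F_p^s for which T(c, A, f_d) is empty. -/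
/-!
Write `S(m)` for the base-`p` digit sum of `m`. For fixed `ξ`, the map `t ↦ T((ξ + t)^d)` on
`F_p` is a polynomial in `t` of degree at most `S(d)`: expand `(ξ + t)^d` binomially, use
`t^(d-k) = t^(S(d-k))` on `F_p`, and note that by Kummer's theorem `C(d,k)` is nonzero mod `p`
only if `S(k) + S(d-k) ≤ S(d)`. For the same reason its coefficient of `t^(S(d))` comes from
`k = 0` alone and equals `T(1)`, whatever `ξ` is. Lagrange interpolation at any `S(d) + 1` points
of `F_p` therefore gives a fixed linear combination of the values `T((ξ + t)^d)` that equals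
`T(1)` for every `ξ`, and prescribing values on which that combination is `T(1) + 1` leaves no
solution `ξ`. The theorem follows because `S(d) = ∑ dᵢ < ∏ (dᵢ + 1) ≤ min p s`.
-/

open Polynomial

/-- The Thue–Morse (sum-of-digits) function on `F` with respect to the ordered
basis `B` of `F` over `F_p`. -/
noncomputable def TM {p r : ℕ} {F : Type*} [Field F] [Algebra (ZMod p) F]
    (B : Module.Basis (Fin r) (ZMod p) F) (ξ : F) : ZMod p :=
  ∑ i, B.repr ξ i

/-- The set `T(c, A, f)` where `A = {α 1, …, α s}` and `c = (c 1, …, c s)`. -/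
noncomputable def TSet {p r s : ℕ} {F : Type*} [Field F] [Algebra (ZMod p) F]
    (B : Module.Basis (Fin r) (ZMod p) F) (c : Fin s → ZMod p) (α : Fin s → F)
    (f : Polynomial F) : Set F :=
  {ξ : F | ∀ i, TM B (f.eval (ξ + α i)) = c i}

open Finset

theorem Finset.sum_add_one_le_prod_add_one {ι R : Type*} [CommSemiring R] [PartialOrder R]
    [IsOrderedRing R] (s : Finset ι) {f : ι → R} (hf : ∀ i ∈ s, 0 ≤ f i) :
    ∑ i ∈ s, f i + 1 ≤ ∏ i ∈ s, (f i + 1) := by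
  classical
  induction s using Finset.induction_on with
  | empty => simp
  | insert a s ha ih =>
    rw [sum_insert ha, prod_insert ha]
    have hfa := hf a (mem_insert_self a s)
    have hs := sum_nonneg fun i hi => hf i (mem_insert_of_mem hi)
    calc f a + ∑ i ∈ s, f i + 1 ≤ f a * ∑ i ∈ s, f i + (f a + ∑ i ∈ s, f i + 1) :=
          le_add_of_nonneg_left (mul_nonneg hfa hs)
      _ = (f a + 1) * (∑ i ∈ s, f i + 1) := by ring
      _ ≤ (f a + 1) * ∏ i ∈ s, (f i + 1) :=
          mul_le_mul_of_nonneg_left (ih fun i hi => hf i (mem_insert_of_mem hi))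
            (add_nonneg hfa zero_le_one)

namespace Nat

theorem ofDigits_ofFn (b n : ℕ) (f : ℕ → ℕ) :
    ofDigits b (List.ofFn fun i : Fin n => f i) = ∑ i ∈ range n, f i * b ^ i := by
  induction n generalizing f with
  | zero => simp
  | succ n ih =>
    rw [List.ofFn_succ, ofDigits_cons, sum_range_succ']
    simp only [Fin.val_zero, Fin.val_succ, ih fun i => f (i + 1), pow_succ, ← mul_assoc,
      ← sum_mul]
    ring

theorem digits_sum_sum_mul_pow_mul_pow {b : ℕ} (hb : 1 < b) {n : ℕ} {a : ℕ → ℕ}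
    (ha : ∀ i < n, a i < b) (j : ℕ) :
    (b.digits ((∑ i ∈ range n, a i * b ^ i) * b ^ j)).sum = ∑ i ∈ range n, a i := by
  have hL : (∑ i ∈ range n, a i * b ^ i) * b ^ j
      = ofDigits b (List.replicate j 0 ++ List.ofFn fun i : Fin n => a i) := by
    rw [ofDigits_append, ofDigits_replicate_zero, ofDigits_ofFn, List.length_replicate]
    ring
  rw [hL, sum_digits_ofDigits_eq_sum hb (l := j + n)]
  · simp [List.sum_ofFn, Fin.sum_univ_eq_sum_range a]
  · refine ⟨by simp, fun x hx => ?_⟩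
    rcases List.mem_append.mp hx with hx | hx
    · rw [List.eq_of_mem_replicate hx]; omega
    · obtain ⟨i, rfl⟩ := List.mem_ofFn.mp hx
      exact ha i i.isLt

theorem eq_zero_of_digits_sum_eq_zero {b k : ℕ} (h : (b.digits k).sum = 0) : k = 0 := by
  by_contra hk
  exact getLast_digit_ne_zero b hk <|
    List.sum_eq_zero_iff.mp h _ (List.getLast_mem (digits_ne_nil_iff_ne_zero.mpr hk))

variable {p : ℕ} [Fact p.Prime]

theorem digits_sum_add_digits_sum_sub_le {d k : ℕ} (hk : k ≤ d)
    (h : (d.choose k : ZMod p) ≠ 0) :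
    (p.digits k).sum + (p.digits (d - k)).sum ≤ (p.digits d).sum := by
  have hval : padicValNat p (d.choose k) = 0 :=
    padicValNat.eq_zero_of_not_dvd fun hdvd => h ((ZMod.natCast_eq_zero_iff _ _).mpr hdvd)
  have := sub_one_mul_padicValNat_choose_eq_sub_sum_digits (p := p) hk
  rw [hval, mul_zero] at this
  omega

end Nat

theorem ZMod.pow_digits_sum {p : ℕ} [Fact p.Prime] (t : ZMod p) (k : ℕ) :
    t ^ (p.digits k).sum = t ^ k := by
  have hp := (Fact.out : p.Prime).one_lt
  induction k using Nat.strong_induction_on with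
  | _ k ih =>
    rcases k.eq_zero_or_pos with rfl | hk
    · simp
    rw [Nat.digits_def' hp hk, List.sum_cons, pow_add, ih _ (Nat.div_lt_self hk hp)]
    conv_rhs => rw [← Nat.mod_add_div k p, pow_add, pow_mul, ZMod.pow_card]

section ThueMorse

variable {p r : ℕ} {F : Type*} [Field F] [Algebra (ZMod p) F]
  (B : Module.Basis (Fin r) (ZMod p) F)

theorem TM_eq_coe_sum_coord : TM B = ⇑(∑ i, B.coord i) := by
  ext ξ
  simp [TM]

theorem exists_TSet_eq_empty [Fintype F] {ι : Type*} {s : ℕ} (f : F[X]) {e : ι → F}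
    (he : Function.Injective e) (A : Finset ι) (g : ι → ZMod p)
    (h : ∀ ξ, ∃ a ∈ A, TM B (f.eval (ξ + e a)) ≠ g a) (hAs : #A ≤ s)
    (hsF : s ≤ Fintype.card F) :
    ∃ α : Fin s → F, Function.Injective α ∧ ∃ c, TSet B c α f = ∅ := by
  classical
  obtain ⟨A', hAA', -, hA'⟩ := exists_subsuperset_card_eq (n := s) (subset_univ (A.image e))
    (by rwa [card_image_of_injective _ he]) (by simpa)
  let σ : A' ≃ Fin s := Fintype.equivFinOfCardEq (by simpa using hA')
  refine ⟨fun i => σ.symm i, Subtype.val_injective.comp σ.symm.injective,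
    fun i => Function.extend e g 0 (σ.symm i), Set.eq_empty_of_forall_notMem fun ξ hξ => ?_⟩
  obtain ⟨a, ha, hne⟩ := h ξ
  have := hξ (σ ⟨e a, hAA' (mem_image_of_mem e ha)⟩)
  simp only [Equiv.symm_apply_apply, he.extend_apply] at this
  exact hne this

variable [Fact p.Prime]

noncomputable def tmShiftPoly (d : ℕ) (ξ : F) : (ZMod p)[X] :=
  ∑ k ∈ range (d + 1), C ((d.choose k : ZMod p) * TM B (ξ ^ k)) * X ^ (p.digits (d - k)).sum

theorem eval_tmShiftPoly (d : ℕ) (ξ : F) (t : ZMod p) :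
    (tmShiftPoly B d ξ).eval t = TM B ((ξ + algebraMap (ZMod p) F t) ^ d) := by
  rw [tmShiftPoly, TM_eq_coe_sum_coord, add_pow, map_sum, eval_finsetSum]
  refine sum_congr rfl fun k _ => ?_
  have : ξ ^ k * algebraMap (ZMod p) F t ^ (d - k) * (d.choose k : F)
      = (t ^ (d - k) * d.choose k) • ξ ^ k := by
    rw [Algebra.smul_def, map_mul, map_pow, map_natCast]
    ring
  rw [this, map_smul, smul_eq_mul, eval_mul, eval_C, eval_pow, eval_X, ZMod.pow_digits_sum]
  ring

theorem natDegree_tmShiftPoly_le (d : ℕ) (ξ : F) :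
    (tmShiftPoly B d ξ).natDegree ≤ (p.digits d).sum := by
  refine natDegree_sum_le_of_forall_le _ _ fun k hk => ?_
  by_cases h : (d.choose k : ZMod p) = 0
  · simp [h]
  · exact (natDegree_C_mul_X_pow_le _ _).trans <| le_of_add_le_right <|
      Nat.digits_sum_add_digits_sum_sub_le (mem_range_succ_iff.mp hk) h

theorem coeff_tmShiftPoly_digits_sum (d : ℕ) (ξ : F) :
    (tmShiftPoly B d ξ).coeff (p.digits d).sum = TM B 1 := by
  rw [tmShiftPoly, finsetSum_coeff, sum_eq_single 0]
  · simp
  · intro k hk hk0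
    rw [coeff_C_mul_X_pow]
    refine ite_eq_right_iff.mpr fun hS => of_not_not fun h => hk0 ?_
    have :=
      Nat.digits_sum_add_digits_sum_sub_le (mem_range_succ_iff.mp hk) (left_ne_zero_of_mul h)
    exact Nat.eq_zero_of_digits_sum_eq_zero (b := p) (by omega)
  · simp

theorem sum_TM_add_pow_div_prod (d : ℕ) (T : Finset (ZMod p)) (hT : #T = (p.digits d).sum + 1)
    (ξ : F) :
    ∑ t ∈ T, TM B ((ξ + algebraMap (ZMod p) F t) ^ d) / ∏ u ∈ T.erase t, (t - u)
      = TM B 1 := by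
  have hdeg : (tmShiftPoly B d ξ).degree < #T := by
    rw [hT]
    exact (degree_le_of_natDegree_le (natDegree_tmShiftPoly_le B d ξ)).trans_lt
      (by exact_mod_cast Nat.lt_succ_self _)
  simpa [hT, eval_tmShiftPoly, coeff_tmShiftPoly_digits_sum] using
    (Lagrange.coeff_eq_sum (v := id) (Set.injOn_id _) hdeg).symm

theorem exists_TM_add_pow_ne (d : ℕ) {T : Finset (ZMod p)} (hT : #T = (p.digits d).sum + 1)
    {t₀ : ZMod p} (ht₀ : t₀ ∈ T) (ξ : F) :
    ∃ t ∈ T, TM B ((ξ + algebraMap (ZMod p) F t) ^ d) ≠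
      if t = t₀ then (TM B 1 + 1) * ∏ u ∈ T.erase t₀, (t₀ - u) else 0 := by
  by_contra! hval
  have hw : ∏ u ∈ T.erase t₀, (t₀ - u) ≠ 0 :=
    prod_ne_zero_iff.mpr fun u hu => sub_ne_zero.mpr (ne_of_mem_erase hu).symm
  have hsum := sum_TM_add_pow_div_prod B d T hT ξ
  rw [sum_congr rfl fun t ht => by rw [hval t ht]] at hsum
  simp only [ite_div, zero_div, sum_ite_eq', if_pos ht₀, mul_div_cancel_right₀ _ hw] at hsum
  exact one_ne_zero (add_eq_left.mp hsum)

end ThueMorse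

theorem stmt1_general {p r : ℕ} [Fact p.Prime]
    {F : Type*} [Field F] [Fintype F] [Algebra (ZMod p) F]
    (hF : Fintype.card F = p ^ r) (B : Module.Basis (Fin r) (ZMod p) F)
    (d j n : ℕ) (dig : ℕ → ℕ)
    (hdrep : d = (∑ i ∈ Finset.range n, dig i * p ^ i) * p ^ j)
    (hdig : ∀ i < n, dig i < p)
    (hD : (∏ i ∈ Finset.range n, (dig i + 1)) ≤ p)
    (s : ℕ) (hs1 : (∏ i ∈ Finset.range n, (dig i + 1)) ≤ s) (hs2 : s ≤ p ^ r) :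
    ∃ α : Fin s → F, Function.Injective α ∧ ∃ c : Fin s → ZMod p,
      TSet B c α (X ^ d : Polynomial F) = ∅ := by
  have hK : (p.digits d).sum + 1 ≤ ∏ i ∈ range n, (dig i + 1) := by
    rw [hdrep, Nat.digits_sum_sum_mul_pow_mul_pow (Fact.out : p.Prime).one_lt hdig]
    exact sum_add_one_le_prod_add_one _ fun _ _ => Nat.zero_le _
  obtain ⟨T, -, hT⟩ := exists_subset_card_eq (s := (univ : Finset (ZMod p)))
    (n := (p.digits d).sum + 1) (by rw [card_univ, ZMod.card]; omega)
  obtain ⟨t₀, ht₀⟩ := card_pos.mp (by omega : 0 < #T)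
  refine exists_TSet_eq_empty B _ (algebraMap (ZMod p) F).injective T
    (fun t => if t = t₀ then (TM B 1 + 1) * ∏ u ∈ T.erase t₀, (t₀ - u) else 0) (fun ξ => ?_)
    (by omega) (hF ▸ hs2)
  simpa using exists_TM_add_pow_ne B d hT ht₀ ξ

theorem stmt1 {p r : ℕ} [Fact p.Prime] (hr : 0 < r)
    {F : Type*} [Field F] [Fintype F] [Algebra (ZMod p) F]
    (hF : Fintype.card F = p ^ r) (B : Module.Basis (Fin r) (ZMod p) F)
    (d j n : ℕ) (dig : ℕ → ℕ)
    (hd1 : 1 ≤ d) (hdq : d < p ^ r)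
    (hgcd : Nat.gcd d (p ^ r) = p ^ j)
    (hdrep : d = (∑ i ∈ Finset.range n, dig i * p ^ i) * p ^ j)
    (hdig : ∀ i < n, dig i < p) (hn : 1 ≤ n)
    (hd0 : dig 0 ≠ 0) (hdtop : dig (n - 1) ≠ 0)
    (hD : (∏ i ∈ Finset.range n, (dig i + 1)) ≤ p)
    (s : ℕ) (hs1 : (∏ i ∈ Finset.range n, (dig i + 1)) ≤ s) (hs2 : s ≤ p ^ r) :
    ∃ α : Fin s → F, Function.Injective α ∧ ∃ c : Fin s → ZMod p,
      TSet B c α (X ^ d : Polynomial F) = ∅ :=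
  stmt1_general hF B d j n dig hdrep hdig hD s hs1 hs2
end

section
/- Let d be an integer with 1 ≤ d < p and let f_d(X) = X^d ∈ F_q[X]. Then for every integer s with d < s ≤ q there exist a subset A ⊆ F_q of size s and a vector c ∈ F_p^s for which T(c, A, f_d) is empty. -/
/-!
The `d`-th forward difference of `x ↦ x ^ d` is the constant `d!`: for every `ξ`,
`∑_{k ≤ d} (-1) ^ (d - k) * (d choose k) * (ξ + k) ^ d = d!`. The digit sum `T` is `F_p`-linear,
so the values `T ((ξ + k) ^ d)` obey the same relation with right-hand side `T d!`. As `d < p`,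
the elements `0, 1, …, d` of `F` are distinct and fit into some `A` of size `s`; prescribing `c`
to be `0` on `1, …, d` and to violate the relation at `0` leaves no `ξ`.
-/

open Polynomial

open Finset

section ForwardDifference

variable {R M : Type*} [CommRing R] [AddCommGroup M]

theorem sum_alternating_choose_map_add_natCast_pow (L : R →+ M) (d : ℕ) (ξ : R) :
    ∑ k ∈ range (d + 1), ((-1 : ℤ) ^ (d - k) * d.choose k) • L ((ξ + k) ^ d) = L d.factorial := by
  have h := congr_fun (fwdDiff_iter_eq_factorial (R := R) (n := d)) ξ
  rw [fwdDiff_iter_eq_sum_shift] at h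
  simpa only [map_sum, map_zsmul, nsmul_one, Pi.natCast_apply] using congrArg L h

theorem not_forall_map_add_natCast_pow_eq_ite (L : R →+ M) {d : ℕ} {x : M}
    (hx : (-1 : ℤ) ^ d • x ≠ L d.factorial) (ξ : R) :
    ¬ ∀ k ≤ d, L ((ξ + k) ^ d) = if k = 0 then x else 0 := by
  intro h
  apply hx
  rw [← sum_alternating_choose_map_add_natCast_pow L d ξ, sum_eq_single 0]
  · rw [h 0 (Nat.zero_le d)]
    simp
  · intro k hk hk0
    simp [h k (Nat.le_of_lt_succ (mem_range.mp hk)), hk0]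
  · simp

end ForwardDifference

theorem Finset.exists_injective_fin_subset_range {α : Type*} [Fintype α] {S : Finset α} {s : ℕ}
    (hS : #S ≤ s) (hs : s ≤ Fintype.card α) :
    ∃ f : Fin s → α, Function.Injective f ∧ ↑S ⊆ Set.range f := by
  obtain ⟨t, hSt, ht⟩ := exists_superset_card_eq hS hs
  let e : t ≃ Fin s := Fintype.equivFinOfCardEq (by simpa using ht)
  exact ⟨fun i ↦ e.symm i, Subtype.val_injective.comp e.symm.injective,
    fun a ha ↦ ⟨e ⟨a, hSt ha⟩, by simp⟩⟩

theorem TM_eq_sum_coord {p r : ℕ} {F : Type*} [Field F] [Algebra (ZMod p) F]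
    (B : Module.Basis (Fin r) (ZMod p) F) : TM B = ⇑(∑ i, B.coord i) := by
  ext ξ
  simp [TM]

theorem stmt4_general {p r : ℕ} [Fact p.Prime]
    {F : Type*} [Field F] [Fintype F] [Algebra (ZMod p) F]
    (hF : Fintype.card F = p ^ r) (B : Module.Basis (Fin r) (ZMod p) F)
    (d : ℕ) (hdp : d < p)
    (s : ℕ) (hs1 : d < s) (hs2 : s ≤ p ^ r) :
    ∃ α : Fin s → F, Function.Injective α ∧ ∃ c : Fin s → ZMod p,
      TSet B c α (X ^ d : Polynomial F) = ∅ := by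
  classical
  have : CharP F p := charP_of_injective_algebraMap (algebraMap (ZMod p) F).injective p
  have hcast : Set.InjOn ((↑) : ℕ → F) (range (d + 1)) := fun a ha b hb ↦
    CharP.natCast_injOn_Iio F p (by simp at ha ⊢; omega) (by simp at hb ⊢; omega)
  obtain ⟨α, hα, hrange⟩ := exists_injective_fin_subset_range
    (S := (range (d + 1)).image ((↑) : ℕ → F))
    (by rw [card_image_of_injOn hcast, card_range]; omega) (hF ▸ hs2)
  let L : F →+ ZMod p := (∑ i, B.coord i).toAddMonoidHom
  let x : ZMod p := (-1) ^ d * (L d.factorial + 1)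
  refine ⟨α, hα, fun i ↦ if α i = 0 then x else 0, Set.eq_empty_of_forall_notMem fun ξ hξ ↦ ?_⟩
  refine not_forall_map_add_natCast_pow_eq_ite L (d := d) (x := x) ?_ ξ fun k hk ↦ ?_
  · simp [x, zsmul_eq_mul, ← mul_assoc, ← mul_pow]
  · obtain ⟨i, hi⟩ := hrange (mem_image_of_mem _ (mem_range.mpr (Nat.lt_succ_of_le hk)))
    have hk' := hξ i
    simp only [hi, eval_pow, eval_X, TM_eq_sum_coord] at hk'
    rw [← Nat.cast_zero, hcast.eq_iff (by simp; omega) (by simp)] at hk'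
    simp only [L, LinearMap.toAddMonoidHom_coe]
    -- the two sides differ only in the `Decidable (k = 0)` instance
    convert hk' using 2

theorem stmt4 {p r : ℕ} [Fact p.Prime] (hr : 0 < r)
    {F : Type*} [Field F] [Fintype F] [Algebra (ZMod p) F]
    (hF : Fintype.card F = p ^ r) (B : Module.Basis (Fin r) (ZMod p) F)
    (d : ℕ) (hd1 : 1 ≤ d) (hdp : d < p)
    (s : ℕ) (hs1 : d < s) (hs2 : s ≤ p ^ r) :
    ∃ α : Fin s → F, Function.Injective α ∧ ∃ c : Fin s → ZMod p,
      TSet B c α (X ^ d : Polynomial F) = ∅ :=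
  stmt4_general hF B d hdp s hs1 hs2
end

section
/- Let f(X) ∈ F_q[X], let A = {α_1, …, α_s} ⊆ F_q be a subset of size s and let c = (c_1, …, c_s) ∈ F_p^s. Then | |T(c, A, f)| − p^{r−s} | ≤ max over all (a_1, …, a_s) ∈ F_p^s with (a_1, …, a_s) ≠ (0, …, 0) of | Σ_{ξ ∈ F_q} ψ( δ · Σ_{i=1}^s a_i f(ξ + α_i) ) |. -/
/-!
Orthogonality of the characters of `F_p^s` gives
`p^s · |T(c, A, f)| = Σ_{a ∈ F_p^s} e_p(-a·c) Σ_ξ e_p(a · (T(f(ξ + α_i)))_i)`.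
The term `a = 0` is `q`; since `T = Tr(δ ·)`, the inner sums for `a ≠ 0` are the sums
`Σ_ξ ψ(δ Σ a_i f(ξ + α_i))`, so each of the remaining `p^s - 1` terms is bounded by their maximum.
-/

open Polynomial

/-- The additive canonical character `ψ(ξ) = e_p(Tr(ξ))` of `F`. -/
noncomputable def psi (p : ℕ) {F : Type*} [Field F] [Algebra (ZMod p) F] (ξ : F) : ℂ :=
  Complex.exp (2 * Real.pi * Complex.I * ((Algebra.trace (ZMod p) F ξ).val : ℂ) / (p : ℂ))

open Finset

namespace AddChar

theorem map_sum_eq_prod {A M : Type*} [AddCommMonoid A] [CommMonoid M] (ψ : AddChar A M)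
    {ι : Type*} (s : Finset ι) (g : ι → A) :
    ψ (∑ i ∈ s, g i) = ∏ i ∈ s, ψ (g i) :=
  map_prod ψ.toMonoidHom (fun i => Multiplicative.ofAdd (g i)) s

variable {R ι X : Type*} [CommRing R] [Fintype R] [DecidableEq R] [Fintype ι] [DecidableEq ι]
  [Fintype X]

theorem sum_apply_dotProduct {R' : Type*} [CommRing R'] [IsDomain R'] {ψ : AddChar R R'}
    (hψ : ψ.IsPrimitive) (t : ι → R) :
    ∑ a : ι → R, ψ (a ⬝ᵥ t) = if t = 0 then (Fintype.card R : R') ^ Fintype.card ι else 0 := by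
  simp_rw [dotProduct, map_sum_eq_prod]
  rw [← Fintype.prod_sum (fun i b => ψ (b * t i))]
  simp_rw [sum_mulShift _ hψ, apply_ite (Nat.cast : ℕ → R'), Nat.cast_zero, Fintype.prod_ite_zero,
    funext_iff, Pi.zero_apply, prod_const, card_univ]

theorem card_pow_mul_card_fiber_eq_sum {R' : Type*} [CommRing R'] [IsDomain R']
    {ψ : AddChar R R'} (hψ : ψ.IsPrimitive) (g : X → ι → R) (c : ι → R) :
    (Fintype.card R : R') ^ Fintype.card ι * #{x | g x = c} =
      ∑ a : ι → R, ψ (-(a ⬝ᵥ c)) * ∑ x, ψ (a ⬝ᵥ g x) := by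
  have hshift (a : ι → R) (x : X) : ψ (-(a ⬝ᵥ c)) * ψ (a ⬝ᵥ g x) = ψ (a ⬝ᵥ (g x - c)) := by
    rw [← map_add_eq_mul, dotProduct_sub, neg_add_eq_sub]
  simp_rw [mul_sum, hshift]
  rw [sum_comm]
  simp_rw [sum_apply_dotProduct hψ, sub_eq_zero, sum_ite, sum_const_zero, add_zero, sum_const,
    nsmul_eq_mul, mul_comm]

theorem abs_card_fiber_sub_le_iSup {ψ : AddChar R ℂ} (hψ : ψ.IsPrimitive) (g : X → ι → R)
    (c : ι → R) :
    |(#{x | g x = c} : ℝ) - Fintype.card X / Fintype.card R ^ Fintype.card ι| ≤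
      ⨆ a : {a : ι → R // a ≠ 0}, ‖∑ x, ψ (a.1 ⬝ᵥ g x)‖ := by
  set M := ⨆ a : {a : ι → R // a ≠ 0}, ‖∑ x, ψ (a.1 ⬝ᵥ g x)‖
  set q : ℕ := Fintype.card R ^ Fintype.card ι
  have hq : (0 : ℝ) < q := by positivity
  have hM (a : ι → R) (ha : a ≠ 0) : ‖∑ x, ψ (a ⬝ᵥ g x)‖ ≤ M :=
    le_ciSup (f := fun a : {a : ι → R // a ≠ 0} => ‖∑ x, ψ (a.1 ⬝ᵥ g x)‖)
      (Set.finite_range _).bddAbove ⟨a, ha⟩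
  have hM0 : 0 ≤ M := Real.iSup_nonneg fun _ => norm_nonneg _
  have hsplit : (q : ℂ) * #{x | g x = c} - Fintype.card X =
      ∑ a ∈ univ.erase 0, ψ (-(a ⬝ᵥ c)) * ∑ x, ψ (a ⬝ᵥ g x) := by
    rw [sum_erase_eq_sub (mem_univ 0), ← card_pow_mul_card_fiber_eq_sum hψ]
    simp [q]
  have hbound : ‖(q : ℂ) * #{x | g x = c} - Fintype.card X‖ ≤ q * M := calc
    _ ≤ ∑ a ∈ univ.erase 0, ‖ψ (-(a ⬝ᵥ c)) * ∑ x, ψ (a ⬝ᵥ g x)‖ := hsplit ▸ norm_sum_le _ _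
    _ ≤ ∑ a ∈ univ.erase (0 : ι → R), M := by
      refine sum_le_sum fun a ha => ?_
      rw [norm_mul, norm_apply, one_mul]
      exact hM a (ne_of_mem_erase ha)
    _ ≤ q * M := by
      rw [sum_const, nsmul_eq_mul]
      gcongr
      exact_mod_cast card_erase_le.trans (by simp [q])
  rw [show (Fintype.card R : ℝ) ^ Fintype.card ι = q by simp [q],
    ← mul_le_mul_iff_of_pos_left hq, ← abs_of_pos hq, ← abs_mul, abs_of_pos hq, mul_sub,
    mul_div_cancel₀ _ hq.ne']
  exact_mod_cast hbound

end AddChar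

section ThueMorse

variable {p r : ℕ} {F : Type*} [Field F] [Algebra (ZMod p) F] (B : Module.Basis (Fin r) (ZMod p) F)

theorem TM_sum_smul {ι : Type*} [Fintype ι] (a : ι → ZMod p) (y : ι → F) :
    TM B (∑ i, a i • y i) = a ⬝ᵥ fun i => TM B (y i) := by
  simp only [TM, map_sum, map_smul, Finsupp.coe_finsetSum, Finsupp.coe_smul, Finset.sum_apply,
    Pi.smul_apply, smul_eq_mul, dotProduct, mul_sum]
  exact sum_comm

variable {δ : Fin r → F}
  (hdual : ∀ i j, Algebra.trace (ZMod p) F (δ i * B j) = if i = j then 1 else 0)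
include hdual

theorem trace_mul_eq_repr (i : Fin r) (x : F) :
    Algebra.trace (ZMod p) F (δ i * x) = B.repr x i := by
  conv_lhs => rw [← B.sum_repr x]
  simp only [mul_sum, map_sum, mul_smul_comm, map_smul, hdual, smul_eq_mul, mul_ite, mul_one,
    mul_zero, sum_ite_eq, mem_univ, if_true]

theorem TM_eq_trace_mul (x : F) : TM B x = Algebra.trace (ZMod p) F ((∑ i, δ i) * x) := by
  simp only [TM, sum_mul, map_sum, trace_mul_eq_repr B hdual]

end ThueMorse

theorem psi_eq_stdAddChar {p : ℕ} [NeZero p] {F : Type*} [Field F] [Algebra (ZMod p) F]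
    (ξ : F) :
    psi p ξ = ZMod.stdAddChar (Algebra.trace (ZMod p) F ξ) := by
  rw [psi, ZMod.stdAddChar_apply, ZMod.toCircle_apply]

theorem stmt11_general {p r : ℕ} [Fact p.Prime]
    {F : Type*} [Field F] [Fintype F] [Algebra (ZMod p) F]
    (hF : Fintype.card F = p ^ r) (B : Module.Basis (Fin r) (ZMod p) F)
    (δ : Fin r → F)
    (hdual : ∀ i j, Algebra.trace (ZMod p) F (δ i * B j) = if i = j then 1 else 0)
    (f : Polynomial F) (s : ℕ)
    (α : Fin s → F) (c : Fin s → ZMod p) :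
    |(Set.ncard (TSet B c α f) : ℝ) - (p : ℝ) ^ ((r : ℤ) - (s : ℤ))| ≤
      ⨆ a : {a : Fin s → ZMod p // a ≠ 0},
        ‖(∑ ξ : F,
          psi p ((∑ i, δ i) * ∑ i, (a.1 i) • f.eval (ξ + α i)))‖ := by
  classical
  set g : F → Fin s → ZMod p := fun ξ i => TM B (f.eval (ξ + α i))
  have hcard : (TSet B c α f).ncard = #{ξ | g ξ = c} := by
    rw [← Set.ncard_coe_finset]
    congr
    ext ξ
    simp [TSet, funext_iff, g]
  have hsum (a : Fin s → ZMod p) (ξ : F) :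
      psi p ((∑ i, δ i) * ∑ i, a i • f.eval (ξ + α i)) = ZMod.stdAddChar (a ⬝ᵥ g ξ) := by
    rw [psi_eq_stdAddChar, ← TM_eq_trace_mul B hdual, TM_sum_smul]
  have hexp : (p : ℝ) ^ ((r : ℤ) - s) =
      Fintype.card F / Fintype.card (ZMod p) ^ Fintype.card (Fin s) := by
    rw [hF, ZMod.card, Fintype.card_fin, zpow_sub₀ (by simp [NeZero.ne]), zpow_natCast,
      zpow_natCast, Nat.cast_pow]
  simp_rw [hcard, hexp, hsum]
  exact AddChar.abs_card_fiber_sub_le_iSup (ZMod.isPrimitive_stdAddChar p) g c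

theorem stmt11 {p r : ℕ} [Fact p.Prime] (hr : 0 < r)
    {F : Type*} [Field F] [Fintype F] [Algebra (ZMod p) F]
    (hF : Fintype.card F = p ^ r) (B : Module.Basis (Fin r) (ZMod p) F)
    (δ : Fin r → F)
    (hdual : ∀ i j, Algebra.trace (ZMod p) F (δ i * B j) = if i = j then 1 else 0)
    (f : Polynomial F) (s : ℕ) (hs1 : 1 ≤ s) (hs2 : s ≤ p ^ r)
    (α : Fin s → F) (hα : Function.Injective α) (c : Fin s → ZMod p) :
    |(Set.ncard (TSet B c α f) : ℝ) - (p : ℝ) ^ ((r : ℤ) - (s : ℤ))| ≤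
      ⨆ a : {a : Fin s → ZMod p // a ≠ 0},
        ‖(∑ ξ : F,
          psi p ((∑ i, δ i) * ∑ i, (a.1 i) • f.eval (ξ + α i)))‖ :=
  stmt11_general hF B δ hdual f s α c
end

section
/- Let d ≥ 1 be an integer with gcd(d,p) = 1, let δ ∈ F_q with δ ≠ 0, let α_1, …, α_s ∈ F_q be pairwise distinct, and let (a_1, …, a_s) ∈ F_p^s with (a_1, …, a_s) ≠ (0, …, 0). Then the rational function F(X) = δ · Σ_{i=1}^s a_i (X + α_i)^{−d} ∈ F_q(X) is not of the form H(X)^p − H(X) for any rational function H(X) over the algebraic closure of F_p. -/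
/-!
At the place `X = -α_j` of an index with `a_j ≠ 0`, the rational function
`δ · Σ aᵢ (X + αᵢ)⁻ᵈ` has a pole of exact order `d`, since the `αᵢ` are distinct. On the other
hand `H ^ p - H` has no pole where `H` has none, and a pole of order `p · m` where `H` has one
of order `m`. So `p ∣ d`, contradicting `gcd (d, p) = 1`.
-/

open Polynomial IsDedekindDomain HeightOneSpectrum WithZero

namespace Valuation

variable {R Γ₀ : Type*} [Ring R] [LinearOrderedCommGroupWithZero Γ₀] (v : Valuation R Γ₀)

theorem map_pow_sub_self_le_one {x : R} (hx : v x ≤ 1) (n : ℕ) : v (x ^ n - x) ≤ 1 :=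
  (v.map_sub _ _).trans (max_le (by rw [map_pow]; exact pow_le_one' hx n) hx)

theorem map_pow_sub_self_of_one_lt {x : R} (hx : 1 < v x) {n : ℕ} (hn : 1 < n) :
    v (x ^ n - x) = v x ^ n := by
  rw [v.map_sub_eq_of_lt_left (by rw [map_pow]; exact lt_self_pow₀ hx hn), map_pow]

theorem dvd_of_map_pow_sub_self_eq_exp (v : Valuation R ℤᵐ⁰) {x : R} {n : ℕ} (hn : 1 < n)
    {m : ℤ} (hm : 0 < m) (h : v (x ^ n - x) = exp m) : (n : ℤ) ∣ m := by
  rcases le_or_gt (v x) 1 with hx | hx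
  · have := h ▸ v.map_pow_sub_self_le_one hx n
    rw [← exp_zero, exp_le_exp] at this
    omega
  · rw [v.map_pow_sub_self_of_one_lt hx hn, ← exp_log (ne_zero_of_lt hx), ← exp_nsmul,
      exp_inj, nsmul_eq_mul] at h
    exact ⟨_, h.symm⟩

end Valuation

namespace Polynomial

variable {K : Type*} [Field K]

noncomputable def idealXSubC (c : K) : HeightOneSpectrum K[X] where
  asIdeal := Ideal.span {X - C c}
  isPrime := (Ideal.span_singleton_prime (X_sub_C_ne_zero c)).2 (prime_X_sub_C c)
  ne_bot := by rw [ne_eq, Ideal.span_singleton_eq_bot]; exact X_sub_C_ne_zero c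

theorem valuation_idealXSubC_X_sub_C_self (c : K) :
    (idealXSubC c).valuation (RatFunc K) (RatFunc.X - RatFunc.C c) = exp (-1 : ℤ) := by
  rw [← RatFunc.algebraMap_X, ← RatFunc.algebraMap_C, ← map_sub, valuation_of_algebraMap,
    intValuation_singleton _ (X_sub_C_ne_zero c) rfl]

theorem valuation_idealXSubC_X_sub_C_of_ne {b c : K} (hbc : b ≠ c) :
    (idealXSubC c).valuation (RatFunc K) (RatFunc.X - RatFunc.C b) = 1 := by
  rw [← RatFunc.algebraMap_X, ← RatFunc.algebraMap_C, ← map_sub, valuation_eq_one_iff_notMem]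
  change X - C b ∉ Ideal.span {X - C c}
  rw [Ideal.mem_span_singleton, dvd_iff_isRoot, IsRoot, eval_sub, eval_X, eval_C, sub_eq_zero]
  exact hbc.symm

theorem valuation_idealXSubC_C (c : K) {k : K} (hk : k ≠ 0) :
    (idealXSubC c).valuation (RatFunc K) (RatFunc.C k) = 1 := by
  rw [← RatFunc.algebraMap_C, valuation_eq_one_iff_notMem]
  change C k ∉ Ideal.span {X - C c}
  rw [Ideal.mem_span_singleton]
  exact fun h => not_isUnit_X_sub_C c (isUnit_of_dvd_unit h (isUnit_C.mpr hk.isUnit))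

theorem valuation_idealXSubC_C_le_one (c k : K) :
    (idealXSubC c).valuation (RatFunc K) (RatFunc.C k) ≤ 1 := by
  rw [← RatFunc.algebraMap_C]
  exact valuation_le_one _ _

theorem valuation_idealXSubC_sum_C_mul_inv_X_sub_C_pow {ι : Type*} [Fintype ι] {c : ι → K}
    (hc : Function.Injective c) {a : ι → K} {j : ι} (ha : a j ≠ 0) {d : ℕ} (hd : 1 ≤ d) :
    (idealXSubC (c j)).valuation (RatFunc K)
        (∑ i, RatFunc.C (a i) * ((RatFunc.X - RatFunc.C (c i))⁻¹) ^ d) = exp (d : ℤ) := by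
  classical
  set v := (idealXSubC (c j)).valuation (RatFunc K)
  have hj : v (RatFunc.C (a j) * ((RatFunc.X - RatFunc.C (c j))⁻¹) ^ d) = exp (d : ℤ) := by
    rw [map_mul, map_pow, map_inv₀, valuation_idealXSubC_C _ ha,
      valuation_idealXSubC_X_sub_C_self, ← exp_neg, neg_neg, ← exp_nsmul, one_mul, nsmul_one]
  refine (v.map_sum_eq_of_lt (Finset.mem_univ j) fun i hi => ?_).trans hj
  rw [hj]
  have hij : c i ≠ c j := hc.ne (by simpa using hi)
  calc v (RatFunc.C (a i) * ((RatFunc.X - RatFunc.C (c i))⁻¹) ^ d) ≤ 1 := by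
        rw [map_mul, map_pow, map_inv₀, valuation_idealXSubC_X_sub_C_of_ne hij, inv_one,
          one_pow, mul_one]
        exact valuation_idealXSubC_C_le_one _ _
    _ < exp (d : ℤ) := by rw [← exp_zero, exp_lt_exp]; omega

end Polynomial

theorem stmt14_general {p : ℕ} [Fact p.Prime]
    {F : Type*} [Field F] [Algebra (ZMod p) F]
    (d : ℕ) (hd1 : 1 ≤ d) (hcop : Nat.Coprime d p)
    (δ : F) (hδ : δ ≠ 0) (s : ℕ)
    (α : Fin s → F) (hα : Function.Injective α)
    (a : Fin s → ZMod p) (ha : a ≠ 0) :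
    ∀ H : RatFunc (AlgebraicClosure F),
      RatFunc.C (algebraMap F (AlgebraicClosure F) δ) *
        ∑ i, RatFunc.C (algebraMap F (AlgebraicClosure F) (algebraMap (ZMod p) F (a i))) *
          ((RatFunc.X + RatFunc.C (algebraMap F (AlgebraicClosure F) (α i)))⁻¹) ^ d ≠
        H ^ p - H := by
  intro H hH
  obtain ⟨j, hj⟩ := Function.ne_iff.mp ha
  set e := algebraMap F (AlgebraicClosure F)
  have hc : Function.Injective fun i => -e (α i) := neg_injective.comp (e.injective.comp hα)
  have hpole := valuation_idealXSubC_sum_C_mul_inv_X_sub_C_pow hc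
    (a := fun i => e (algebraMap (ZMod p) F (a i))) (by simpa using hj) hd1
  simp only [map_neg, sub_neg_eq_add] at hpole
  have hval : (idealXSubC (-e (α j))).valuation _ (H ^ p - H) = exp (d : ℤ) := by
    rw [← hH, Valuation.map_mul, valuation_idealXSubC_C _ ((map_ne_zero e).2 hδ), one_mul, hpole]
  have hpd : p ∣ d := Int.natCast_dvd_natCast.mp <|
    Valuation.dvd_of_map_pow_sub_self_eq_exp _ (Fact.out : p.Prime).one_lt (by omega) hval
  exact (Fact.out : p.Prime).one_lt.ne' (hcop.symm.eq_one_of_dvd hpd)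

theorem stmt14 {p r : ℕ} [Fact p.Prime] (hr : 0 < r)
    {F : Type*} [Field F] [Fintype F] [Algebra (ZMod p) F]
    (hF : Fintype.card F = p ^ r)
    (d : ℕ) (hd1 : 1 ≤ d) (hcop : Nat.Coprime d p)
    (δ : F) (hδ : δ ≠ 0) (s : ℕ)
    (α : Fin s → F) (hα : Function.Injective α)
    (a : Fin s → ZMod p) (ha : a ≠ 0) :
    ∀ H : RatFunc (AlgebraicClosure F),
      RatFunc.C (algebraMap F (AlgebraicClosure F) δ) *
        ∑ i, RatFunc.C (algebraMap F (AlgebraicClosure F) (algebraMap (ZMod p) F (a i))) *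
          ((RatFunc.X + RatFunc.C (algebraMap F (AlgebraicClosure F) (α i)))⁻¹) ^ d ≠
        H ^ p - H :=
  stmt14_general d hd1 hcop δ hδ s α hα a ha
end

section
/- Let d be an integer with 1 ≤ d < q and gcd(d,p) = 1, and let d_0 be the unique integer with d_0 ≡ d (mod p) and 1 ≤ d_0 < p. Let f(X) ∈ F_q[X] be a polynomial of degree d, let s be an integer with 1 ≤ s ≤ d_0, let δ ∈ F_q with δ ≠ 0, let α_1, …, α_s ∈ F_q be pairwise distinct and let (a_1, …, a_s) ∈ F_p^s. If δ · Σ_{i=1}^s a_i f(X + α_i) equals g(X)^p − g(X) + c for some g(X) ∈ F_q[X] and c ∈ F_q, then a_1 = … = a_s = 0. -/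
open Polynomial

theorem stmt15 {p r : ℕ} [Fact p.Prime] (hr : 0 < r)
    {F : Type*} [Field F] [Fintype F] [Algebra (ZMod p) F]
    (hF : Fintype.card F = p ^ r)
    (d d₀ : ℕ) (hd1 : 1 ≤ d) (hdq : d < p ^ r) (hcop : Nat.Coprime d p)
    (hd₀ : d₀ ≡ d [MOD p]) (hd₀1 : 1 ≤ d₀) (hd₀p : d₀ < p)
    (f : Polynomial F) (hdeg : f.natDegree = d)
    (s : ℕ) (hs1 : 1 ≤ s) (hs2 : s ≤ d₀)
    (δ : F) (hδ : δ ≠ 0) (α : Fin s → F) (hα : Function.Injective α)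
    (a : Fin s → ZMod p) (g : Polynomial F) (c : F)
    (heq : Polynomial.C δ * ∑ i, (a i) • f.comp (Polynomial.X + Polynomial.C (α i)) =
      g ^ p - g + Polynomial.C c) :
    ∀ i, a i = 0 := by
  have hp : p.Prime := Fact.out
  have hAinj : Function.Injective (algebraMap (ZMod p) F) :=
    (algebraMap (ZMod p) F).injective
  by_contra hcon
  push_neg at hcon
  obtain ⟨i0, hi0⟩ := hcon
  haveI : CharP F p := charP_of_injective_algebraMap hAinj p
  set t : ℕ → F := fun m => ∑ i, algebraMap (ZMod p) F (a i) * α i ^ m with ht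
  have hd₀d : d₀ ≤ d := by
    rcases lt_or_ge d p with h | h
    · have : d₀ % p = d % p := hd₀
      rw [Nat.mod_eq_of_lt hd₀p, Nat.mod_eq_of_lt h] at this
      omega
    · omega
  have hex : ∃ j, t j ≠ 0 := by
    by_contra h
    push_neg at h
    have hz : (fun i => algebraMap (ZMod p) F (a i)) = 0 :=
      Matrix.eq_zero_of_forall_pow_sum_mul_pow_eq_zero hα (fun i => h i)
    exact hi0 (hAinj (by rw [show algebraMap (ZMod p) F (a i0) = 0 from congrFun hz i0, map_zero]))
  classical
  set j : ℕ := Nat.find hex with hj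
  have htj : t j ≠ 0 := Nat.find_spec hex
  have hmin : ∀ m, m < j → t m = 0 := by
    intro m hm
    by_contra hmne
    exact absurd (Nat.find_min' hex hmne) (by omega)
  have hjs : j < s := by
    by_contra hjge
    push_neg at hjge
    have hz : (fun i => algebraMap (ZMod p) F (a i)) = 0 :=
      Matrix.eq_zero_of_forall_pow_sum_mul_pow_eq_zero hα
        (fun i => hmin i (lt_of_lt_of_le i.isLt hjge))
    exact hi0 (hAinj (by rw [show algebraMap (ZMod p) F (a i0) = 0 from congrFun hz i0, map_zero]))
  have hjd : j < d := by omega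
  set h : Polynomial F := ∑ i, (a i) • f.comp (Polynomial.X + Polynomial.C (α i)) with hhdef
  have hcoeff : ∀ n, n ≤ d →
      h.coeff n = ∑ m ∈ Finset.range (d - n + 1), (f.hasseDeriv n).coeff m * t m := by
    intro n hn
    have hdle : (f.hasseDeriv n).natDegree < d - n + 1 := by
      have := f.natDegree_hasseDeriv_le n
      omega
    rw [hhdef, finset_sum_coeff]
    have step : ∀ i : Fin s, ((a i) • f.comp (X + C (α i))).coeff n
        = ∑ m ∈ Finset.range (d - n + 1),
            (f.hasseDeriv n).coeff m * (algebraMap (ZMod p) F (a i) * α i ^ m) := by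
      intro i
      rw [coeff_smul, ← taylor_apply, taylor_coeff, eval_eq_sum_range' hdle]
      rw [Finset.smul_sum]
      refine Finset.sum_congr rfl (fun m _ => ?_)
      rw [Algebra.smul_def]
      ring
    rw [Finset.sum_congr rfl (fun i _ => step i), Finset.sum_comm]
    refine Finset.sum_congr rfl (fun m _ => ?_)
    rw [ht, Finset.mul_sum]
  have hfne : f ≠ 0 := fun h0 => by rw [h0, natDegree_zero] at hdeg; omega
  have hlc : f.coeff d ≠ 0 := hdeg ▸ (leadingCoeff_ne_zero.mpr hfne)
  -- p does not divide the binomial coefficient d choose j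
  have hndvd : ¬ p ∣ d.choose j := by
    intro hdvd
    have hd0j : ¬ p ∣ d₀.choose j := by
      intro hdvd'
      have h1 : p ∣ d₀.factorial := by
        have := Nat.choose_mul_factorial_mul_factorial (le_of_lt (lt_of_lt_of_le hjs hs2))
        exact this ▸ (hdvd'.mul_right _).mul_right _
      exact absurd ((Nat.Prime.dvd_factorial hp).mp h1) (by omega)
    have hlucas := Choose.choose_modEq_choose_mod_mul_choose_div_nat (p := p) (n := d) (k := j)
    have hjp : j % p = j := Nat.mod_eq_of_lt (by omega)
    have hjdiv : j / p = 0 := Nat.div_eq_of_lt (by omega)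
    have hdp : d % p = d₀ := by
      have : d₀ % p = d % p := hd₀
      rw [Nat.mod_eq_of_lt hd₀p] at this
      omega
    rw [hjp, hjdiv, hdp, Nat.choose_zero_right, mul_one] at hlucas
    have : d.choose j % p = d₀.choose j % p := hlucas
    have hz : d.choose j % p = 0 := Nat.dvd_iff_mod_eq_zero.mp hdvd
    exact hd0j (Nat.dvd_iff_mod_eq_zero.mpr (by omega))
  have hchoose : ((d.choose j : ℕ) : F) ≠ 0 := by
    rw [Ne, CharP.cast_eq_zero_iff F p]
    exact hndvd
  -- the key coefficient of h
  have hcj : h.coeff (d - j) ≠ 0 := by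
    rw [hcoeff (d - j) (by omega), show d - (d - j) = j by omega, Finset.sum_range_succ]
    have hz : ∑ m ∈ Finset.range j, (f.hasseDeriv (d - j)).coeff m * t m = 0 := by
      refine Finset.sum_eq_zero (fun m hm => ?_)
      rw [hmin m (Finset.mem_range.mp hm), mul_zero]
    rw [hz, zero_add, hasseDeriv_coeff, show j + (d - j) = d by omega,
      Nat.choose_symm (le_of_lt hjd)]
    · exact mul_ne_zero (mul_ne_zero hchoose hlc) htj
  have hhigh : ∀ n, d - j < n → h.coeff n = 0 := by
    intro n hn
    rcases le_or_gt n d with hnd | hnd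
    · rw [hcoeff n hnd]
      refine Finset.sum_eq_zero (fun m hm => ?_)
      have : m < j := by
        have := Finset.mem_range.mp hm
        omega
      rw [hmin m this, mul_zero]
    · rw [hhdef, finset_sum_coeff]
      refine Finset.sum_eq_zero (fun i _ => ?_)
      rw [coeff_smul, ← taylor_apply,
        coeff_eq_zero_of_natDegree_lt (by rw [natDegree_taylor, hdeg]; exact hnd), smul_zero]
  have hndeg : h.natDegree = d - j :=
    le_antisymm (natDegree_le_iff_coeff_eq_zero.mpr hhigh) (le_natDegree_of_ne_zero hcj)
  -- degree of LHS
  have hLdeg : (C δ * h).natDegree = d - j := by rw [natDegree_C_mul hδ, hndeg]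
  have hdeq := congrArg natDegree heq
  rw [hLdeg] at hdeq
  have hDpos : 0 < d - j := by omega
  -- p does not divide d - j
  have hpD : ¬ p ∣ (d - j) := by
    intro hdvd
    have h1 : p ∣ d - d₀ := (Nat.modEq_iff_dvd' hd₀d).mp hd₀
    have h2 : p ∣ d₀ - j := by
      have : d₀ - j = (d - j) - (d - d₀) := by omega
      rw [this]
      exact Nat.dvd_sub hdvd h1
    have := Nat.le_of_dvd (by omega) h2
    omega
  -- degree analysis of the RHS
  rcases Nat.eq_zero_or_pos g.natDegree with h0 | h0
  · have hg : g = C (g.coeff 0) := eq_C_of_natDegree_eq_zero h0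
    rw [hg, ← C_pow, ← C_sub, ← C_add, natDegree_C] at hdeq
    omega
  · have hgne : g ≠ 0 := fun hg => by rw [hg, natDegree_zero] at h0; omega
    have hpow : (g ^ p).natDegree = p * g.natDegree :=
      natDegree_pow' (pow_ne_zero p (leadingCoeff_ne_zero.mpr hgne))
    have hrw : g ^ p - g + C c = g ^ p + (C c - g) := by ring
    have hlt : (C c - g).natDegree < (g ^ p).natDegree := by
      have h1 : (C c - g).natDegree ≤ max (C c).natDegree g.natDegree := natDegree_sub_le _ _
      rw [natDegree_C] at h1
      have h2 : g.natDegree < p * g.natDegree := by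
        have := hp.two_le
        nlinarith
      rw [hpow]
      omega
    rw [hrw, natDegree_add_eq_left_of_natDegree_lt hlt, hpow] at hdeq
    exact hpD ⟨g.natDegree, hdeq⟩
end

section
/- Let (δ_1, …, δ_r) be the dual basis of the ordered basis B with respect to the trace form and δ = δ_1 + … + δ_r. Suppose f(X) = δ^{−1}(g(X)^p − g(X) + c) for some g(X) ∈ F_q[X] and c ∈ F_q. Then T(f(ξ + α)) = Tr(c) for all ξ, α ∈ F_q; consequently, for any s with 1 ≤ s ≤ q, any subset A ⊆ F_q of size s, and any vector (c_1, …, c_s) ∈ F_p^s with c_1 ≠ Tr(c), the set T((c_1,…,c_s), A, f) is empty. -/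
open Polynomial

/-!
The `i`-th digit of `ξ` in the basis `B` is `Tr(δ_i ξ)`, so `T(ξ) = Tr(δ ξ)` and
`T(δ⁻¹ y) = Tr(y)`. For `y = g(x)^p - g(x) + c` the trace is invariant under the
Frobenius `y ↦ y^p`, hence `Tr(y) = Tr(c)` whatever `x` is.
-/

theorem Algebra.trace_pow_card {K L : Type*} [Field K] [Fintype K] [Field L] [Algebra K L]
    [Algebra.IsAlgebraic K L] (x : L) :
    Algebra.trace K L (x ^ Fintype.card K) = Algebra.trace K L x :=
  Algebra.trace_eq_of_algEquiv (FiniteField.frobeniusAlgEquivOfAlgebraic K L) x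

namespace Module.Basis

variable {K L ι : Type*} [CommRing K] [CommRing L] [Algebra K L] [Fintype ι] [DecidableEq ι]
  (B : Basis ι K L) {δ : ι → L}
  (hdual : ∀ i j, Algebra.trace K L (δ i * B j) = if i = j then 1 else 0)
include hdual

theorem repr_eq_trace_dual_mul (x : L) (i : ι) :
    B.repr x i = Algebra.trace K L (δ i * x) := by
  conv_rhs => rw [← B.sum_repr x]
  simp only [Finset.mul_sum, map_sum, Algebra.mul_smul_comm, map_smul, hdual, smul_eq_mul,
    mul_ite, mul_one, mul_zero, Finset.sum_ite_eq, Finset.mem_univ, if_true]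

theorem sum_repr_eq_trace_sum_dual_mul (x : L) :
    ∑ i, B.repr x i = Algebra.trace K L ((∑ i, δ i) * x) := by
  simp only [Finset.sum_mul, map_sum, B.repr_eq_trace_dual_mul hdual]

theorem sum_dual_ne_zero [Nontrivial K] [Nontrivial L] : ∑ i, δ i ≠ 0 := by
  obtain ⟨i⟩ := B.index_nonempty
  intro h
  have := B.sum_repr_eq_trace_sum_dual_mul hdual (B i)
  simp [h] at this

end Module.Basis

theorem ZMod.trace_pow_sub_self_add {p : ℕ} [Fact p.Prime] {F : Type*} [Field F]
    [Algebra (ZMod p) F] [Algebra.IsAlgebraic (ZMod p) F] (a c : F) :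
    Algebra.trace (ZMod p) F (a ^ p - a + c) = Algebra.trace (ZMod p) F c := by
  have hfrob := Algebra.trace_pow_card (K := ZMod p) a
  rw [ZMod.card] at hfrob
  rw [map_add, map_sub, hfrob, sub_self, zero_add]

theorem TM_sum_dual_inv_mul {p r : ℕ} [Fact p.Prime] {F : Type*} [Field F] [Algebra (ZMod p) F]
    (B : Module.Basis (Fin r) (ZMod p) F) {δ : Fin r → F}
    (hdual : ∀ i j, Algebra.trace (ZMod p) F (δ i * B j) = if i = j then 1 else 0) (y : F) :
    TM B ((∑ i, δ i)⁻¹ * y) = Algebra.trace (ZMod p) F y := by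
  rw [TM, B.sum_repr_eq_trace_sum_dual_mul hdual, ← mul_assoc,
    mul_inv_cancel₀ (B.sum_dual_ne_zero hdual), one_mul]

theorem stmt16_general {p r : ℕ} [Fact p.Prime]
    {F : Type*} [Field F] [Algebra (ZMod p) F]
    (B : Module.Basis (Fin r) (ZMod p) F)
    (δ : Fin r → F)
    (hdual : ∀ i j, Algebra.trace (ZMod p) F (δ i * B j) = if i = j then 1 else 0)
    (g : Polynomial F) (c : F) (f : Polynomial F)
    (hf : f = Polynomial.C (∑ i, δ i)⁻¹ * (g ^ p - g + Polynomial.C c)) :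
    (∀ ξ α : F, TM B (f.eval (ξ + α)) = Algebra.trace (ZMod p) F c) ∧
      ∀ (s : ℕ) (hs1 : 1 ≤ s), s ≤ p ^ r →
        ∀ α : Fin s → F, Function.Injective α →
          ∀ cs : Fin s → ZMod p, cs ⟨0, hs1⟩ ≠ Algebra.trace (ZMod p) F c →
            TSet B cs α f = ∅ := by
  have : Module.Finite (ZMod p) F := .of_basis B
  have hTM : ∀ ξ α : F, TM B (f.eval (ξ + α)) = Algebra.trace (ZMod p) F c := by
    intro ξ α
    simp only [hf, eval_mul, eval_C, eval_add, eval_sub, eval_pow]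
    rw [TM_sum_dual_inv_mul B hdual, ZMod.trace_pow_sub_self_add]
  refine ⟨hTM, fun s hs1 _ α _ cs hcs => Set.eq_empty_of_forall_notMem fun ξ hξ => hcs ?_⟩
  exact (hξ ⟨0, hs1⟩).symm.trans (hTM ξ (α ⟨0, hs1⟩))

theorem stmt16 {p r : ℕ} [Fact p.Prime] (hr : 0 < r)
    {F : Type*} [Field F] [Fintype F] [Algebra (ZMod p) F]
    (hF : Fintype.card F = p ^ r) (B : Module.Basis (Fin r) (ZMod p) F)
    (δ : Fin r → F)
    (hdual : ∀ i j, Algebra.trace (ZMod p) F (δ i * B j) = if i = j then 1 else 0)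
    (g : Polynomial F) (c : F) (f : Polynomial F)
    (hf : f = Polynomial.C (∑ i, δ i)⁻¹ * (g ^ p - g + Polynomial.C c)) :
    (∀ ξ α : F, TM B (f.eval (ξ + α)) = Algebra.trace (ZMod p) F c) ∧
      ∀ (s : ℕ) (hs1 : 1 ≤ s), s ≤ p ^ r →
        ∀ α : Fin s → F, Function.Injective α →
          ∀ cs : Fin s → ZMod p, cs ⟨0, hs1⟩ ≠ Algebra.trace (ZMod p) F c →
            TSet B cs α f = ∅ :=
  stmt16_general B δ hdual g c f hf
end

section
/- Let p be a prime and d an integer with p-adic expansion d = d_0 + d_1 p + … + d_{n-1} p^{n-1}, where 0 ≤ d_i < p, d_0 ≠ 0 and d_{n-1} ≠ 0, and suppose d_m = d_{m+1} = … = d_{m+k-1} = p−1 for some m, k with 1 ≤ m ≤ m+k ≤ n−1. Then the binomial coefficient C(d−1, p^m · ℓ) is not divisible by p for every integer ℓ with 0 ≤ ℓ ≤ (d_{m+k}+1)·p^k − 1. -/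
/-!
By Lucas's theorem it suffices to compare base-`p` digits. Since `d₀ ≠ 0`, subtracting one
changes only the lowest digit of `d`, so `d - 1` has digit `dᵢ` in every position `i ≥ 1`, while the
digits of `p ^ m * ℓ` are those of `ℓ` shifted up by `m`. The bound `ℓ < (d_{m+k} + 1) * p ^ k`
makes the `k` lowest digits of `ℓ` face the digits `p - 1` of `d`, its digit at position `k` at most
`d_{m+k}`, and all higher ones zero.
-/

open Finset

namespace Nat

theorem Prime.not_dvd_choose_of_lt {p a b : ℕ} (hp : p.Prime) (ha : a < p) (hb : b ≤ a) :
    ¬ p ∣ a.choose b := fun h ↦ by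
  have : p ∣ a ! := choose_mul_factorial_mul_factorial hb ▸ (h.mul_right _).mul_right _
  exact absurd ((hp.dvd_factorial).1 this) (not_le.2 ha)

theorem not_dvd_choose_of_digit_le {p n k : ℕ} [hp : Fact p.Prime]
    (h : ∀ i, k / p ^ i % p ≤ n / p ^ i % p) : ¬ p ∣ n.choose k := by
  induction k using Nat.strong_induction_on generalizing n with
  | _ k ih =>
  rcases eq_or_ne k 0 with rfl | hk
  · simpa using hp.out.one_lt.ne'
  have hlow : ¬ p ∣ (n % p).choose (k % p) :=
    hp.out.not_dvd_choose_of_lt (mod_lt _ hp.out.pos) (by simpa using h 0)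
  have hhigh : ¬ p ∣ (n / p).choose (k / p) := by
    refine ih _ (div_lt_self (pos_of_ne_zero hk) hp.out.one_lt) fun i ↦ ?_
    simpa [Nat.div_div_eq_div_mul, ← pow_succ'] using h (i + 1)
  rw [Choose.choose_modEq_choose_mod_mul_choose_div_nat.dvd_iff dvd_rfl]
  exact hp.out.prime.not_dvd_mul hlow hhigh

section Digits

variable {p n t : ℕ} {f : ℕ → ℕ}

theorem sum_digit_mul_pow_lt (hf : ∀ i < t, f i < p) : ∑ i ∈ range t, f i * p ^ i < p ^ t := by
  induction t with
  | zero => simp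
  | succ t ih =>
    have hlow := ih fun i hi ↦ hf i (by omega)
    have htop : f t * p ^ t + p ^ t ≤ p ^ (t + 1) := by
      rw [pow_succ', ← succ_mul]; exact Nat.mul_le_mul_right _ (hf t (by omega))
    rw [sum_range_succ]; omega

theorem sum_digit_mul_pow_mod_pow (hf : ∀ i < n, f i < p) (ht : t ≤ n) :
    (∑ i ∈ range n, f i * p ^ i) % p ^ t = ∑ i ∈ range t, f i * p ^ i := by
  have hdvd : p ^ t ∣ ∑ i ∈ Ico t n, f i * p ^ i :=
    dvd_sum fun i hi ↦ (pow_dvd_pow p (mem_Ico.1 hi).1).mul_left _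
  rw [← sum_range_add_sum_Ico _ ht, add_mod, mod_eq_zero_of_dvd hdvd, add_zero, mod_mod,
    mod_eq_of_lt (sum_digit_mul_pow_lt fun i hi ↦ hf i (by omega))]

theorem sum_digit_mul_pow_div_pow_mod (hf : ∀ i < n, f i < p) (ht : t < n) :
    (∑ i ∈ range n, f i * p ^ i) / p ^ t % p = f t := by
  have hp : 0 < p ^ t := pow_pos ((zero_le _).trans_lt (hf t ht)) _
  have := sum_digit_mul_pow_mod_pow hf ht
  rw [mod_pow_succ, sum_digit_mul_pow_mod_pow hf ht.le, sum_range_succ, mul_comm (f t)] at this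
  exact Nat.eq_of_mul_eq_mul_left hp (by omega)

end Digits

theorem sub_one_div_pow_of_not_dvd {p d i : ℕ} (hd : ¬ p ∣ d) (hi : i ≠ 0) :
    (d - 1) / p ^ i = d / p ^ i := by
  obtain ⟨i, rfl⟩ := exists_eq_succ_of_ne_zero hi
  obtain ⟨e, rfl⟩ := exists_eq_succ_of_ne_zero (ne_of_apply_ne (p ∣ ·) (by simpa using hd))
  rw [pow_succ', ← Nat.div_div_eq_div_mul, ← Nat.div_div_eq_div_mul, succ_div_of_not_dvd hd,
    succ_sub_one]

theorem pow_mul_div_pow_mod_of_lt {p m i : ℕ} (ℓ : ℕ) (hi : i < m) : p ^ m * ℓ / p ^ i % p = 0 :=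
  mod_eq_zero_of_dvd <| dvd_div_of_mul_dvd <| (pow_succ p i ▸ pow_dvd_pow p hi).mul_right ℓ

theorem pow_mul_div_pow_add {p : ℕ} (hp : 0 < p) (m j ℓ : ℕ) :
    p ^ m * ℓ / p ^ (m + j) = ℓ / p ^ j := by
  rw [pow_add, Nat.mul_div_mul_left _ _ (pow_pos hp m)]

end Nat

theorem stmt17_general (p : ℕ) (hp : p.Prime) (d n : ℕ) (dig : ℕ → ℕ)
    (hdrep : d = ∑ i ∈ Finset.range n, dig i * p ^ i)
    (hdig : ∀ i < n, dig i < p) (hd0 : dig 0 ≠ 0)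
    (m k : ℕ) (hm : 1 ≤ m) (hmk : m + k ≤ n - 1)
    (hconsec : ∀ i, m ≤ i → i < m + k → dig i = p - 1)
    (ℓ : ℕ) (hℓ : ℓ ≤ (dig (m + k) + 1) * p ^ k - 1) :
    ¬ p ∣ Nat.choose (d - 1) (p ^ m * ℓ) := by
  have := Fact.mk hp
  have hd : ¬ p ∣ d := by
    have hd_mod := Nat.sum_digit_mul_pow_div_pow_mod hdig (t := 0) (by omega)
    rw [← hdrep, pow_zero, Nat.div_one] at hd_mod
    rwa [Nat.dvd_iff_mod_eq_zero, hd_mod]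
  have hdigit : ∀ i, i ≠ 0 → i < n → (d - 1) / p ^ i % p = dig i := fun i hi hin ↦ by
    rw [Nat.sub_one_div_pow_of_not_dvd hd hi, hdrep, Nat.sum_digit_mul_pow_div_pow_mod hdig hin]
  have hℓlt : ℓ < (dig (m + k) + 1) * p ^ k := by
    have : 0 < p ^ k := pow_pos hp.pos k
    have : 0 < (dig (m + k) + 1) * p ^ k := by positivity
    omega
  refine Nat.not_dvd_choose_of_digit_le fun i ↦ ?_
  rcases lt_or_ge i m with hi | hi
  · simp [Nat.pow_mul_div_pow_mod_of_lt ℓ hi]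
  obtain ⟨j, rfl⟩ := Nat.exists_eq_add_of_le hi
  rw [Nat.pow_mul_div_pow_add hp.pos]
  rcases lt_trichotomy j k with hj | rfl | hj
  · rw [hdigit _ (by omega) (by omega), hconsec _ (by omega) (by omega)]
    exact Nat.le_sub_one_of_lt (Nat.mod_lt _ hp.pos)
  · rw [hdigit _ (by omega) (by omega)]
    exact (Nat.mod_le _ _).trans
      (Nat.lt_succ_iff.1 ((Nat.div_lt_iff_lt_mul (pow_pos hp.pos j)).2 hℓlt))
  · have : ℓ < p ^ j := calc
      ℓ < (dig (m + k) + 1) * p ^ k := hℓlt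
      _ ≤ p * p ^ k := Nat.mul_le_mul_right _ (hdig _ (by omega))
      _ ≤ p ^ j := pow_succ' p k ▸ Nat.pow_le_pow_right hp.pos hj
    simp [Nat.div_eq_of_lt this]

theorem stmt17 (p : ℕ) (hp : p.Prime) (d n : ℕ) (dig : ℕ → ℕ)
    (hdrep : d = ∑ i ∈ Finset.range n, dig i * p ^ i)
    (hdig : ∀ i < n, dig i < p) (hd0 : dig 0 ≠ 0) (hdtop : dig (n - 1) ≠ 0)
    (m k : ℕ) (hm : 1 ≤ m) (hmk : m + k ≤ n - 1)
    (hconsec : ∀ i, m ≤ i → i < m + k → dig i = p - 1)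
    (ℓ : ℕ) (hℓ : ℓ ≤ (dig (m + k) + 1) * p ^ k - 1) :
    ¬ p ∣ Nat.choose (d - 1) (p ^ m * ℓ) :=
  stmt17_general p hp d n dig hdrep hdig hd0 m k hm hmk hconsec ℓ hℓ
end
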